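/- Let f : X → ℝ be M-Lipschitz, let γ > 0, ε ≥ 0, and let φ = φ_{γ, εM} be the ramp function with parameters γ and c = εM. Then for any distribution D on X × {−1,1} and any sample (x₁,y₁),…,(xₙ,yₙ): err_D(f, ε) ≤ E_{(x,y)∼D}[φ(−y f(x))], and (1/n)Σᵢ φ(−yᵢ f(xᵢ)) ≤ (1/n)Σᵢ 1{yᵢ f(xᵢ) < γ + εM}. -/

import Mathlib

/-!
A perturbation `‖δ‖ ≤ ε` moves an `M`-Lipschitz `f` by at most `εM`, so a point attacked successfully
has margin `y f(x) ≤ εM`, where the ramp `φ_{γ,εM}(-y f(x))` already equals `1`; Markov's inequality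
turns this pointwise bound into the bound on `err_D(f, ε)`. The empirical inequality is pointwise:
`φ_{γ,c}(-s)` vanishes once `s ≥ γ + c` and never exceeds `1`.
-/

open MeasureTheory

noncomputable def ramp (γ c t : ℝ) : ℝ := min 1 (max 0 (1 + (t + c) / γ))

section Ramp

variable {γ : ℝ} (c t : ℝ)

lemma ramp_nonneg : 0 ≤ ramp γ c t :=
  le_min zero_le_one (le_max_left _ _)

lemma ramp_le_one : ramp γ c t ≤ 1 :=
  min_le_left _ _

lemma continuous_ramp : Continuous (ramp γ c) := by
  unfold ramp
  fun_prop

variable {c t}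

lemma ramp_eq_one (hγ : 0 < γ) (h : -c ≤ t) : ramp γ c t = 1 := by
  have : 0 ≤ (t + c) / γ := div_nonneg (by linarith) hγ.le
  exact min_eq_left (le_max_of_le_right (by linarith))

lemma ramp_eq_zero (hγ : 0 < γ) (h : t + c ≤ -γ) : ramp γ c t = 0 := by
  have : (t + c) / γ ≤ -1 := by rwa [div_le_iff₀ hγ, neg_one_mul]
  rw [ramp, max_eq_left (by linarith), min_eq_right zero_le_one]

lemma ramp_neg_le_ite (hγ : 0 < γ) (s : ℝ) :
    ramp γ c (-s) ≤ if s < γ + c then 1 else 0 := by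
  split_ifs with hs
  · exact ramp_le_one c (-s)
  · exact (ramp_eq_zero hγ (by linarith)).le

end Ramp

lemma integrable_ramp_comp {α : Type*} [MeasurableSpace α] {μ : Measure α} [IsFiniteMeasure μ]
    {g : α → ℝ} (hg : Measurable g) (γ c : ℝ) : Integrable (fun a ↦ ramp γ c (g a)) μ :=
  .of_bound ((continuous_ramp c).measurable.comp hg).aestronglyMeasurable 1 <| ae_of_all _ fun a ↦ by
    rw [Real.norm_eq_abs, abs_of_nonneg (ramp_nonneg c _)]
    exact ramp_le_one c _

lemma LipschitzWith.mul_le_of_mul_add_neg {X : Type*} [SeminormedAddGroup X] {f : X → ℝ}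
    {M : NNReal} (hf : LipschitzWith M f) {x δ : X} {y ε : ℝ} (hy : |y| ≤ 1) (hδ : ‖δ‖ ≤ ε)
    (h : y * f (x + δ) < 0) : y * f x ≤ ε * M := by
  have hdist : |f x - f (x + δ)| ≤ ε * M := calc
    |f x - f (x + δ)| = dist (f x) (f (x + δ)) := (Real.dist_eq _ _).symm
    _ ≤ M * dist x (x + δ) := hf.dist_le_mul _ _
    _ = M * ‖δ‖ := by rw [dist_self_add_right]
    _ ≤ ε * M := by rw [mul_comm]; gcongr
  calc y * f x = y * f (x + δ) + y * (f x - f (x + δ)) := by ring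
    _ ≤ |y * (f x - f (x + δ))| := by linarith [le_abs_self (y * (f x - f (x + δ)))]
    _ = |y| * |f x - f (x + δ)| := abs_mul _ _
    _ ≤ 1 * (ε * M) := by gcongr
    _ = ε * M := one_mul _

theorem LipschitzWith.measureReal_robustError_le_integral_ramp {X : Type*}
    [SeminormedAddCommGroup X] [MeasurableSpace X] [BorelSpace X] {f : X → ℝ} {M : NNReal}
    (hf : LipschitzWith M f) {γ : ℝ} (hγ : 0 < γ) (ε : ℝ) (D : Measure (X × ℝ))
    [IsFiniteMeasure D] (hlab : ∀ᵐ p ∂D, |p.2| ≤ 1) :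
    D.real {p | ∃ δ : X, ‖δ‖ ≤ ε ∧ p.2 * f (p.1 + δ) < 0} ≤
      ∫ p, ramp γ (ε * M) (-(p.2 * f p.1)) ∂D := by
  have hmargin : {p : X × ℝ | ∃ δ : X, ‖δ‖ ≤ ε ∧ p.2 * f (p.1 + δ) < 0} ≤ᵐ[D]
      {p | 1 ≤ ramp γ (ε * M) (-(p.2 * f p.1))} := by
    filter_upwards [hlab] with p hp ⟨δ, hδ, hneg⟩
    exact (ramp_eq_one hγ (by linarith [hf.mul_le_of_mul_add_neg hp hδ hneg])).ge
  have hmeas : Measurable fun p : X × ℝ ↦ -(p.2 * f p.1) :=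
    (measurable_snd.mul (hf.continuous.measurable.comp measurable_fst)).neg
  calc _ ≤ D.real {p | 1 ≤ ramp γ (ε * M) (-(p.2 * f p.1))} :=
        ENNReal.toReal_mono (measure_ne_top _ _) (measure_mono_ae hmargin)
    _ ≤ _ := by
      simpa using mul_meas_ge_le_integral_of_nonneg (ae_of_all _ fun p ↦ ramp_nonneg _ _)
        (integrable_ramp_comp hmeas γ (ε * M)) 1

theorem ramp_sandwich_general {X : Type*} [NormedAddCommGroup X]
    [MeasurableSpace X] [BorelSpace X]
    (f : X → ℝ) (M : NNReal) (hf : LipschitzWith M f)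
    (γ : ℝ) (hγ : 0 < γ) (ε : ℝ)
    (D : Measure (X × ℝ)) [IsProbabilityMeasure D]
    (hlab : D {p : X × ℝ | p.2 = 1 ∨ p.2 = -1} = 1)
    (n : ℕ) (x : Fin n → X) (y : Fin n → ℝ) :
    (D {p : X × ℝ | ∃ δ : X, ‖δ‖ ≤ ε ∧ p.2 * f (p.1 + δ) < 0}).toReal ≤
      ∫ p, min 1 (max 0 (1 + (-(p.2 * f p.1) + ε * M) / γ)) ∂D ∧
    (1 / n : ℝ) * ∑ i, min 1 (max 0 (1 + (-(y i * f (x i)) + ε * M) / γ)) ≤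
      (1 / n : ℝ) * ∑ i, (if y i * f (x i) < γ + ε * M then (1 : ℝ) else 0) := by
  have hlabels : ∀ᵐ p ∂D, p.2 = 1 ∨ p.2 = -1 :=
    (mem_ae_iff_prob_eq_one (by measurability)).2 hlab
  refine ⟨hf.measureReal_robustError_le_integral_ramp hγ ε D ?_, ?_⟩
  · filter_upwards [hlabels] with p hp
    rcases hp with hp | hp <;> simp [hp]
  · exact mul_le_mul_of_nonneg_left (Finset.sum_le_sum fun i _ ↦ ramp_neg_le_ite hγ _)
      (by positivity)

/-- Sandwich inequalities for the ramp loss `φ = φ_{γ, εM}`: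
`err_D(f, ε) ≤ E[φ(−y f(x))]` and the empirical `φ`-loss is bounded by the
empirical margin loss at level `γ + εM`. -/
theorem ramp_sandwich {X : Type*} [NormedAddCommGroup X] [NormedSpace ℝ X]
    [MeasurableSpace X] [BorelSpace X]
    (f : X → ℝ) (M : NNReal) (hf : LipschitzWith M f)
    (γ : ℝ) (hγ : 0 < γ) (ε : ℝ) (hε : 0 ≤ ε)
    (D : Measure (X × ℝ)) [IsProbabilityMeasure D]
    (hlab : D {p : X × ℝ | p.2 = 1 ∨ p.2 = -1} = 1)
    (n : ℕ) (x : Fin n → X) (y : Fin n → ℝ) (hy : ∀ i, y i = 1 ∨ y i = -1) :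
    (D {p : X × ℝ | ∃ δ : X, ‖δ‖ ≤ ε ∧ p.2 * f (p.1 + δ) < 0}).toReal ≤
      ∫ p, min 1 (max 0 (1 + (-(p.2 * f p.1) + ε * M) / γ)) ∂D ∧
    (1 / n : ℝ) * ∑ i, min 1 (max 0 (1 + (-(y i * f (x i)) + ε * M) / γ)) ≤
      (1 / n : ℝ) * ∑ i, (if y i * f (x i) < γ + ε * M then (1 : ℝ) else 0) :=
  ramp_sandwich_general f M hf γ hγ ε D hlab n x y
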